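/- arXiv:2105.04153 — 3 statements merged into one kernel-verified Lean document; each statement's English description precedes it below -/
import Mathlib

section
/- Let L ≥ μ > 0, set κ = L/μ, let τ ≥ 0, and let γ satisfy 2 ≤ γ ≤ 8κ. Define η_t = 2/(μ(γ+t)) for t ≥ 0. If the nonnegative real sequence (Δ_t)_{t≥0} satisfies Δ_{t+1} ≤ (1 − μη_t)Δ_t + η_t² τ for all t ≥ 0, then for every T ≥ 0, Δ_T ≤ max{4τ/μ², γΔ_0}/(γ+T), and consequently (L/2)·Δ_T ≤ (2κ/(γ+T))·(τ/μ + 2LΔ_0). -/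
/-!
With `η t = 2/(μ(γ+t))` the recursion reads `Δ (t+1) ≤ (1 - 2/x) Δ t + (4τ/μ²)/x²` with `x = γ + t`.
If `Δ t ≤ v/x` for some `v ≥ 4τ/μ²`, the right-hand side is at most `(x - 1) v/x² ≤ v/(x + 1)`,
so `Δ T ≤ v/(γ+T)` follows by induction from `γ Δ 0 ≤ v`. The second bound then uses
`γ ≤ 8κ` to compare `(L/2) γ Δ 0` with `4κ L Δ 0`.
-/

lemma one_sub_two_div_mul_div_add_div_sq_le {x v a : ℝ} (hx : 0 < x) (hv : 0 ≤ v) (ha : a ≤ v) :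
    (1 - 2 / x) * (v / x) + a / x ^ 2 ≤ v / (x + 1) := by
  calc (1 - 2 / x) * (v / x) + a / x ^ 2 ≤ (1 - 2 / x) * (v / x) + v / x ^ 2 := by gcongr
    _ = (x - 1) * v / x ^ 2 := by field_simp; ring
    _ ≤ v / (x + 1) := by
      rw [div_le_div_iff₀ (by positivity) (by positivity)]
      nlinarith [mul_nonneg hv hx.le]

theorem le_div_of_le_one_sub_two_div_mul_add {γ a v : ℝ} {u : ℕ → ℝ} (hγ : 2 ≤ γ)
    (hv : 0 ≤ v) (ha : a ≤ v) (h0 : γ * u 0 ≤ v)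
    (hrec : ∀ t : ℕ, u (t + 1) ≤ (1 - 2 / (γ + t)) * u t + a / (γ + t) ^ 2) (T : ℕ) :
    u T ≤ v / (γ + T) := by
  induction T with
  | zero => simpa [le_div_iff₀ (by linarith : 0 < γ), mul_comm] using h0
  | succ t ih =>
    have hx : 2 ≤ γ + t := le_add_of_le_of_nonneg hγ t.cast_nonneg
    have hcoef : 0 ≤ 1 - 2 / (γ + t) := sub_nonneg.2 ((div_le_one (by linarith)).2 hx)
    calc u (t + 1) ≤ (1 - 2 / (γ + t)) * u t + a / (γ + t) ^ 2 := hrec t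
      _ ≤ (1 - 2 / (γ + t)) * (v / (γ + t)) + a / (γ + t) ^ 2 := by gcongr
      _ ≤ v / (γ + t + 1) := one_sub_two_div_mul_div_add_div_sq_le (by linarith) hv ha
      _ = v / (γ + ↑(t + 1)) := by push_cast; ring

lemma half_mul_max_le {L μ τ γ d : ℝ} (hμ : 0 < μ) (hL : 0 ≤ L) (hτ : 0 ≤ τ) (hd : 0 ≤ d)
    (hγ : γ ≤ 8 * (L / μ)) :
    L / 2 * max (4 * τ / μ ^ 2) (γ * d) ≤ 2 * (L / μ) * (τ / μ + 2 * L * d) := by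
  have hτ' : 0 ≤ 2 * (L / μ) * (τ / μ) := by positivity
  have hd' : 0 ≤ 2 * (L / μ) * (2 * L * d) := by positivity
  rw [mul_max_of_nonneg _ _ (by positivity), max_le_iff]
  constructor
  · calc L / 2 * (4 * τ / μ ^ 2) = 2 * (L / μ) * (τ / μ) := by field_simp; ring
      _ ≤ _ := by linarith
  · calc L / 2 * (γ * d) ≤ L / 2 * (8 * (L / μ) * d) := by gcongr
      _ = 2 * (L / μ) * (2 * L * d) := by ring
      _ ≤ _ := by linarith

theorem fedavg_explicit_stepsize_recursion_general
    (L μ κ τ γ : ℝ) (hμ : 0 < μ) (hκ : κ = L / μ) (hτ : 0 ≤ τ)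
    (hγ2 : 2 ≤ γ) (hγ8 : γ ≤ 8 * κ)
    (η : ℕ → ℝ) (hη : ∀ t : ℕ, η t = 2 / (μ * (γ + (t : ℝ))))
    (Δ : ℕ → ℝ) (hΔ : ∀ t : ℕ, 0 ≤ Δ t)
    (hrec : ∀ t : ℕ, Δ (t + 1) ≤ (1 - μ * η t) * Δ t + (η t) ^ 2 * τ) :
    ∀ T : ℕ,
      Δ T ≤ max (4 * τ / μ ^ 2) (γ * Δ 0) / (γ + (T : ℝ)) ∧
      L / 2 * Δ T ≤ 2 * κ / (γ + (T : ℝ)) * (τ / μ + 2 * L * Δ 0) := by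
  subst hκ
  have hL : 0 ≤ L := by
    have : 0 < L / μ := by linarith
    exact ((div_pos_iff_of_pos_right hμ).1 this).le
  have hrec' (t : ℕ) : Δ (t + 1) ≤ (1 - 2 / (γ + t)) * Δ t + 4 * τ / μ ^ 2 / (γ + t) ^ 2 := by
    have hx : 0 < γ + t := by positivity
    convert hrec t using 3 <;> rw [hη]
    · field_simp
    · field_simp; ring
  have hbound := le_div_of_le_one_sub_two_div_mul_add hγ2
    (le_max_of_le_right (mul_nonneg (by linarith) (hΔ 0))) (le_max_left _ _) (le_max_right _ _)
    hrec'
  intro T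
  refine ⟨hbound T, ?_⟩
  calc L / 2 * Δ T ≤ L / 2 * (max (4 * τ / μ ^ 2) (γ * Δ 0) / (γ + T)) := by gcongr; exact hbound T
    _ = L / 2 * max (4 * τ / μ ^ 2) (γ * Δ 0) / (γ + T) := by ring
    _ ≤ 2 * (L / μ) * (τ / μ + 2 * L * Δ 0) / (γ + T) :=
      div_le_div_of_nonneg_right (half_mul_max_le hμ hL hτ (hΔ 0) hγ8) (by positivity)
    _ = _ := by ring

/-- The deterministic recursion with step size `η t = 2/(μ(γ+t))`
underlying Theorems 2 and 4. With `L ≥ μ > 0`, `κ = L/μ`, `τ ≥ 0` and `2 ≤ γ ≤ 8κ`,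
if `Δ (t+1) ≤ (1 − μ η t) Δ t + (η t)² τ` for all `t`, then for every `T`,
`Δ T ≤ max (4τ/μ²) (γ Δ 0) / (γ + T)` and consequently
`(L/2) Δ T ≤ (2κ/(γ+T)) (τ/μ + 2 L Δ 0)`. -/
theorem fedavg_explicit_stepsize_recursion
    (L μ κ τ γ : ℝ) (hμ : 0 < μ) (hL : μ ≤ L) (hκ : κ = L / μ) (hτ : 0 ≤ τ)
    (hγ2 : 2 ≤ γ) (hγ8 : γ ≤ 8 * κ)
    (η : ℕ → ℝ) (hη : ∀ t : ℕ, η t = 2 / (μ * (γ + (t : ℝ))))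
    (Δ : ℕ → ℝ) (hΔ : ∀ t : ℕ, 0 ≤ Δ t)
    (hrec : ∀ t : ℕ, Δ (t + 1) ≤ (1 - μ * η t) * Δ t + (η t) ^ 2 * τ) :
    ∀ T : ℕ,
      Δ T ≤ max (4 * τ / μ ^ 2) (γ * Δ 0) / (γ + (T : ℝ)) ∧
      L / 2 * Δ T ≤ 2 * κ / (γ + (T : ℝ)) * (τ / μ + 2 * L * Δ 0) :=
  fedavg_explicit_stepsize_recursion_general L μ κ τ γ hμ hκ hτ hγ2 hγ8 η hη Δ hΔ hrec
end

section
/- Let E ≥ 1 be an integer, let t_0 ≤ t be integers with t − t_0 ≤ E − 1, and let η_{t_0} ≥ η_{t_0+1} ≥ … ≥ η_t > 0 be step sizes with η_{t_0} ≤ 2η_t. Let p_1,…,p_N ≥ 0 with Σ_i p_i = 1, fix w ∈ ℝ^d, and for each i = 1,…,N and j = t_0,…,t−1 let g^i_j be random vectors with E‖g^i_j‖² ≤ G². Define w^i_t = w − Σ_{j=t_0}^{t−1} η_j g^i_j and w̄_t = Σ_i p_i w^i_t. Then Σ_i p_i E‖w̄_t − w^i_t‖² ≤ 4 η_t² (E−1)²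 G². -/
/-!
Write `u_i = Σ_j η_j g^i_j`, so that `w^i_t = w − u_i` and `w̄_t − w^i_t = u_i − Σ_k p_k u_k`.
The weighted variance of the `u_i` is at most their weighted second moment, and each
`‖u_i‖²` is at most `(t − t₀) (2η_t)² Σ_j ‖g^i_j‖²` by Cauchy–Schwarz, since
`0 < η_j ≤ η_{t₀} ≤ 2η_t`. Taking expectations gives `(t − t₀)² (2η_t)² G²`.
-/

open MeasureTheory Finset

section WeightedVariance

variable {ι E : Type*} [Fintype ι] [NormedAddCommGroup E] [InnerProductSpace ℝ E]

theorem sum_mul_norm_sub_sq_eq_norm_sub_weightedAverage_sq_add {p : ι → ℝ}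
    (hp1 : ∑ i, p i = 1) (x : ι → E) (c : E) :
    ∑ i, p i * ‖c - x i‖ ^ 2 =
      ‖c - ∑ k, p k • x k‖ ^ 2 + ∑ i, p i * ‖∑ k, p k • x k - x i‖ ^ 2 := by
  set xb := ∑ k, p k • x k
  have hcentered : ∑ i, p i • (xb - x i) = 0 := by
    simp only [smul_sub, sum_sub_distrib, ← sum_smul, hp1, one_smul, xb, sub_self]
  have hcross : ∑ i, p i * inner ℝ (c - xb) (xb - x i) = 0 := by
    simp only [← real_inner_smul_right, ← inner_sum, hcentered, inner_zero_right]
  calc ∑ i, p i * ‖c - x i‖ ^ 2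
      = ∑ i, p i * (‖c - xb‖ ^ 2 + 2 * inner ℝ (c - xb) (xb - x i) + ‖xb - x i‖ ^ 2) := by
        refine sum_congr rfl fun i _ => ?_
        rw [← norm_add_sq_real, sub_add_sub_cancel]
    _ = (∑ i, p i) * ‖c - xb‖ ^ 2 + 2 * ∑ i, p i * inner ℝ (c - xb) (xb - x i) +
          ∑ i, p i * ‖xb - x i‖ ^ 2 := by
        rw [sum_mul, mul_sum, ← sum_add_distrib, ← sum_add_distrib]
        exact sum_congr rfl fun i _ => by ring
    _ = ‖c - xb‖ ^ 2 + ∑ i, p i * ‖xb - x i‖ ^ 2 := by rw [hp1, hcross]; ring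

theorem sum_mul_norm_weightedAverage_sub_sq_le {p : ι → ℝ} (hp1 : ∑ i, p i = 1)
    (x : ι → E) (c : E) :
    ∑ i, p i * ‖∑ k, p k • x k - x i‖ ^ 2 ≤ ∑ i, p i * ‖c - x i‖ ^ 2 := by
  rw [sum_mul_norm_sub_sq_eq_norm_sub_weightedAverage_sq_add hp1 x c]
  exact le_add_of_nonneg_left (sq_nonneg _)

theorem sum_mul_integral_norm_weightedAverage_sub_sq_le {Ω : Type*} [MeasurableSpace Ω]
    {μ : Measure Ω} {p : ι → ℝ} (hp1 : ∑ i, p i = 1) {X : ι → Ω → E}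
    (hX : ∀ i, MemLp (X i) 2 μ) :
    ∑ i, p i * ∫ ω, ‖∑ k, p k • X k ω - X i ω‖ ^ 2 ∂μ ≤
      ∑ i, p i * ∫ ω, ‖X i ω‖ ^ 2 ∂μ := by
  have hXbar : MemLp (fun ω => ∑ k, p k • X k ω) 2 μ :=
    memLp_finsetSum _ fun k _ => (hX k).const_smul (p k)
  have hdev (i : ι) : Integrable (fun ω => ‖∑ k, p k • X k ω - X i ω‖ ^ 2) μ :=
    (hXbar.sub (hX i)).integrable_norm_pow two_ne_zero
  have hsq (i : ι) : Integrable (fun ω => ‖X i ω‖ ^ 2) μ :=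
    (hX i).integrable_norm_pow two_ne_zero
  simp only [← integral_const_mul]
  rw [← integral_finsetSum _ fun i _ => (hdev i).const_mul _,
    ← integral_finsetSum _ fun i _ => (hsq i).const_mul _]
  refine integral_mono (integrable_finsetSum _ fun i _ => (hdev i).const_mul _)
    (integrable_finsetSum _ fun i _ => (hsq i).const_mul _) fun ω => ?_
  simpa using sum_mul_norm_weightedAverage_sub_sq_le hp1 (fun i => X i ω) 0

end WeightedVariance

section BoundedCoefficients

variable {ι E : Type*} [NormedAddCommGroup E] [NormedSpace ℝ E]

theorem norm_sum_smul_sq_le {s : Finset ι} {a : ι → ℝ} {c : ℝ} (ha : ∀ j ∈ s, |a j| ≤ c)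
    (v : ι → E) :
    ‖∑ j ∈ s, a j • v j‖ ^ 2 ≤ #s * c ^ 2 * ∑ j ∈ s, ‖v j‖ ^ 2 := by
  have hnorm : ‖∑ j ∈ s, a j • v j‖ ≤ c * ∑ j ∈ s, ‖v j‖ := by
    rw [mul_sum]
    refine (norm_sum_le _ _).trans (sum_le_sum fun j hj => ?_)
    rw [norm_smul, Real.norm_eq_abs]
    exact mul_le_mul_of_nonneg_right (ha j hj) (norm_nonneg _)
  calc ‖∑ j ∈ s, a j • v j‖ ^ 2 ≤ (c * ∑ j ∈ s, ‖v j‖) ^ 2 :=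
        pow_le_pow_left₀ (norm_nonneg _) hnorm 2
    _ = c ^ 2 * (∑ j ∈ s, ‖v j‖) ^ 2 := mul_pow _ _ _
    _ ≤ c ^ 2 * (#s * ∑ j ∈ s, ‖v j‖ ^ 2) := by gcongr; exact sq_sum_le_card_mul_sum_sq
    _ = #s * c ^ 2 * ∑ j ∈ s, ‖v j‖ ^ 2 := by ring

theorem integral_norm_sum_smul_sq_le {Ω : Type*} [MeasurableSpace Ω] {μ : Measure Ω}
    {s : Finset ι} {a : ι → ℝ} {c M : ℝ} (ha : ∀ j ∈ s, |a j| ≤ c) {f : ι → Ω → E}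
    (hf : ∀ j ∈ s, Integrable (fun ω => ‖f j ω‖ ^ 2) μ)
    (hM : ∀ j ∈ s, ∫ ω, ‖f j ω‖ ^ 2 ∂μ ≤ M) :
    ∫ ω, ‖∑ j ∈ s, a j • f j ω‖ ^ 2 ∂μ ≤ (#s * c) ^ 2 * M := by
  calc ∫ ω, ‖∑ j ∈ s, a j • f j ω‖ ^ 2 ∂μ
      ≤ ∫ ω, #s * c ^ 2 * ∑ j ∈ s, ‖f j ω‖ ^ 2 ∂μ :=
        integral_mono_of_nonneg (.of_forall fun _ => sq_nonneg _)
          ((integrable_finsetSum s hf).const_mul _)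
          (.of_forall fun ω => norm_sum_smul_sq_le ha fun j => f j ω)
    _ = #s * c ^ 2 * ∑ j ∈ s, ∫ ω, ‖f j ω‖ ^ 2 ∂μ := by
        rw [integral_const_mul, integral_finsetSum s hf]
    _ ≤ #s * c ^ 2 * (#s * M) := by
        gcongr
        simpa using sum_le_sum hM
    _ = (#s * c) ^ 2 * M := by ring

end BoundedCoefficients

theorem local_iterate_divergence_bound_general
    {Ω : Type*} [MeasurableSpace Ω] (P : Measure Ω)
    (d N EE : ℕ) (hE : 1 ≤ EE) (t₀ t : ℕ) (htE : t - t₀ ≤ EE - 1)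
    (η : ℕ → ℝ)
    (hη_pos : ∀ j, t₀ ≤ j → j ≤ t → 0 < η j)
    (hη_mono : ∀ j k, t₀ ≤ j → j ≤ k → k ≤ t → η k ≤ η j)
    (hη_ratio : η t₀ ≤ 2 * η t)
    (p : Fin N → ℝ) (hp : ∀ i, 0 ≤ p i) (hp1 : ∑ i, p i = 1)
    (G : ℝ) (w : EuclideanSpace ℝ (Fin d))
    (g : Fin N → ℕ → Ω → EuclideanSpace ℝ (Fin d))
    (hg_meas : ∀ i, ∀ j ∈ Finset.Ico t₀ t, AEStronglyMeasurable (g i j) P)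
    (hg_int : ∀ i, ∀ j ∈ Finset.Ico t₀ t, Integrable (fun ω => ‖g i j ω‖ ^ 2) P)
    (hg_bound : ∀ i, ∀ j ∈ Finset.Ico t₀ t, ∫ ω, ‖g i j ω‖ ^ 2 ∂P ≤ G ^ 2)
    (wi : Fin N → Ω → EuclideanSpace ℝ (Fin d))
    (hwi : ∀ i ω, wi i ω = w - ∑ j ∈ Finset.Ico t₀ t, η j • g i j ω)
    (wbar : Ω → EuclideanSpace ℝ (Fin d))
    (hwbar : ∀ ω, wbar ω = ∑ i, p i • wi i ω) :
    ∑ i, p i * ∫ ω, ‖wbar ω - wi i ω‖ ^ 2 ∂P ≤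
      4 * η t ^ 2 * ((EE : ℝ) - 1) ^ 2 * G ^ 2 := by
  set u : Fin N → Ω → EuclideanSpace ℝ (Fin d) := fun i ω => ∑ j ∈ Ico t₀ t, η j • g i j ω
  have hη_le : ∀ j ∈ Ico t₀ t, |η j| ≤ 2 * η t := fun j hj => by
    obtain ⟨hj₀, hj⟩ := mem_Ico.mp hj
    rw [abs_of_pos (hη_pos j hj₀ hj.le)]
    exact (hη_mono t₀ j le_rfl hj₀ hj.le).trans hη_ratio
  have hu : ∀ i, MemLp (u i) 2 P := fun i => memLp_finsetSum _ fun j hj =>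
    (((memLp_two_iff_integrable_sq_norm (hg_meas i j hj)).mpr (hg_int i j hj)).const_smul (η j))
  have hdiv : ∀ i ω, ‖wbar ω - wi i ω‖ = ‖∑ k, p k • u k ω - u i ω‖ := fun i ω => by
    simp only [hwbar, hwi, smul_sub, sum_sub_distrib, ← sum_smul, hp1, one_smul, u]
    rw [← norm_neg]
    congr 1
    abel
  have hcard : ((#(Ico t₀ t) : ℕ) : ℝ) ^ 2 ≤ ((EE : ℝ) - 1) ^ 2 := by
    rw [Nat.card_Ico, ← Nat.cast_one, ← Nat.cast_sub hE]
    gcongr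
  calc ∑ i, p i * ∫ ω, ‖wbar ω - wi i ω‖ ^ 2 ∂P
      = ∑ i, p i * ∫ ω, ‖∑ k, p k • u k ω - u i ω‖ ^ 2 ∂P := by simp only [hdiv]
    _ ≤ ∑ i, p i * ∫ ω, ‖u i ω‖ ^ 2 ∂P := sum_mul_integral_norm_weightedAverage_sub_sq_le hp1 hu
    _ ≤ ∑ i, p i * ((#(Ico t₀ t) * (2 * η t)) ^ 2 * G ^ 2) := by
        gcongr with i
        · exact hp i
        · exact integral_norm_sum_smul_sq_le hη_le (hg_int i) (hg_bound i)
    _ = #(Ico t₀ t) ^ 2 * (4 * η t ^ 2 * G ^ 2) := by rw [← sum_mul, hp1]; ring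
    _ ≤ ((EE : ℝ) - 1) ^ 2 * (4 * η t ^ 2 * G ^ 2) := by gcongr
    _ = 4 * η t ^ 2 * ((EE : ℝ) - 1) ^ 2 * G ^ 2 := by ring

/-- Bounding the divergence of local FedAvg iterates from their
weighted average: starting from a common point `w`, after at most `E − 1` local SGD
steps with nonincreasing step sizes `η_{t₀} ≥ … ≥ η_t > 0`, `η_{t₀} ≤ 2 η_t`, and
stochastic gradients with `E‖g^i_j‖² ≤ G²`, one has
`Σ_i p_i E‖w̄_t − w^i_t‖² ≤ 4 η_t² (E−1)² G²`. -/
theorem local_iterate_divergence_bound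
    {Ω : Type*} [MeasurableSpace Ω] (P : Measure Ω) [IsProbabilityMeasure P]
    (d N EE : ℕ) (hE : 1 ≤ EE) (t₀ t : ℕ) (ht : t₀ ≤ t) (htE : t - t₀ ≤ EE - 1)
    (η : ℕ → ℝ)
    (hη_pos : ∀ j, t₀ ≤ j → j ≤ t → 0 < η j)
    (hη_mono : ∀ j k, t₀ ≤ j → j ≤ k → k ≤ t → η k ≤ η j)
    (hη_ratio : η t₀ ≤ 2 * η t)
    (p : Fin N → ℝ) (hp : ∀ i, 0 ≤ p i) (hp1 : ∑ i, p i = 1)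
    (G : ℝ) (w : EuclideanSpace ℝ (Fin d))
    (g : Fin N → ℕ → Ω → EuclideanSpace ℝ (Fin d))
    (hg_meas : ∀ i, ∀ j ∈ Finset.Ico t₀ t, AEStronglyMeasurable (g i j) P)
    (hg_int : ∀ i, ∀ j ∈ Finset.Ico t₀ t, Integrable (fun ω => ‖g i j ω‖ ^ 2) P)
    (hg_bound : ∀ i, ∀ j ∈ Finset.Ico t₀ t, ∫ ω, ‖g i j ω‖ ^ 2 ∂P ≤ G ^ 2)
    (wi : Fin N → Ω → EuclideanSpace ℝ (Fin d))
    (hwi : ∀ i ω, wi i ω = w - ∑ j ∈ Finset.Ico t₀ t, η j • g i j ω)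
    (wbar : Ω → EuclideanSpace ℝ (Fin d))
    (hwbar : ∀ ω, wbar ω = ∑ i, p i • wi i ω) :
    ∑ i, p i * ∫ ω, ‖wbar ω - wi i ω‖ ^ 2 ∂P ≤
      4 * η t ^ 2 * ((EE : ℝ) - 1) ^ 2 * G ^ 2 :=
  local_iterate_divergence_bound_general P d N EE hE t₀ t htE η hη_pos hη_mono hη_ratio p hp hp1 G w
    g hg_meas hg_int hg_bound wi hwi wbar hwbar
end

section
/- Let d ≥ 1, Z ≥ 2 be integers and let U ∈ ℝ^d with coordinates U_1,…,U_d. Let U_min = min_m U_m, U_max = max_m U_m, and define Z uniformly spaced centroids r_z = U_min + (z−1)(U_max − U_min)/(Z−1) for z = 1,…,Z. For each coordinate m, let z(m) ∈ {1,…,Z−1} be any index with r_{z(m)} ≤ U_m ≤ r_{z(m)+1}. Then Σ_{m=1}^{d} ( r_{z(m)+1} − U_m )( U_m − r_{z(m)} ) ≤ ( d / (2(Z−1)²) ) · ‖U‖², where ‖U‖² = Σ_m U_m². -/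
/-! By AM-GM each summand is at most a quarter of the squared centroid spacing
`(U_max - U_min) / (Z - 1)`, and the squared range `(U_max - U_min)²` of a vector is at most
twice its squared norm. -/

open Finset

lemma sub_mul_sub_le_sq_div_four (a b u : ℝ) : (b - u) * (u - a) ≤ (b - a) ^ 2 / 4 := by
  have h := four_mul_le_sq_add (b - u) (u - a)
  rw [sub_add_sub_cancel] at h
  linarith

lemma sub_sq_le_two_mul_sum_sq {ι : Type*} [Fintype ι] (U : ι → ℝ) (i j : ι) :
    (U i - U j) ^ 2 ≤ 2 * ∑ k, U k ^ 2 := by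
  classical
  have h_sum_nonneg : 0 ≤ ∑ k, U k ^ 2 := sum_nonneg fun k _ => sq_nonneg (U k)
  obtain rfl | hij := eq_or_ne i j
  · simpa using h_sum_nonneg
  have h_pair : U i ^ 2 + U j ^ 2 ≤ ∑ k, U k ^ 2 := by
    rw [← sum_pair (f := fun k => U k ^ 2) hij]
    exact sum_le_sum_of_subset_of_nonneg (subset_univ _) fun k _ _ => sq_nonneg (U k)
  nlinarith [sq_nonneg (U i + U j)]

theorem mucsc_uniform_centroid_error_bound_general
    (d Z : ℕ)
    (U : Fin d → ℝ) (Umin Umax : ℝ)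
    (hUmin : IsLeast (Set.range U) Umin) (hUmax : IsGreatest (Set.range U) Umax)
    (r : ℕ → ℝ)
    (hr : ∀ z : ℕ, r z = Umin + ((z : ℝ) - 1) * (Umax - Umin) / ((Z : ℝ) - 1))
    (zm : Fin d → ℕ) :
    ∑ m, (r (zm m + 1) - U m) * (U m - r (zm m)) ≤
      (d : ℝ) / (2 * ((Z : ℝ) - 1) ^ 2) * ∑ m, (U m) ^ 2 := by
  obtain ⟨⟨i, rfl⟩, -⟩ := hUmin
  obtain ⟨⟨j, rfl⟩, -⟩ := hUmax
  have h_spacing (z : ℕ) : r (z + 1) - r z = (U j - U i) / ((Z : ℝ) - 1) := by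
    rw [hr, hr]
    push_cast
    ring
  generalize (Z : ℝ) - 1 = k at h_spacing ⊢
  calc ∑ m, (r (zm m + 1) - U m) * (U m - r (zm m))
      ≤ ∑ _m : Fin d, ((U j - U i) / k) ^ 2 / 4 :=
        sum_le_sum fun m _ => h_spacing (zm m) ▸ sub_mul_sub_le_sq_div_four _ _ _
    _ = (d : ℝ) / (4 * k ^ 2) * (U j - U i) ^ 2 := by
        rw [sum_const, card_univ, Fintype.card_fin, nsmul_eq_mul, div_pow]
        ring
    _ ≤ (d : ℝ) / (4 * k ^ 2) * (2 * ∑ m, U m ^ 2) := by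
        gcongr
        exact sub_sq_le_two_mul_sum_sq U j i
    _ = (d : ℝ) / (2 * k ^ 2) * ∑ m, U m ^ 2 := by ring

/-- Bound on the total expected squared error of MUCSC stochastic
quantization with `Z` uniformly spaced centroids: for `U ∈ ℝ^d` with coordinates
`U 1, …, U d`, centroids `r z = U_min + (z−1)(U_max − U_min)/(Z−1)`, and any choice of
indices `z(m) ∈ {1,…,Z−1}` with `r (z m) ≤ U m ≤ r (z m + 1)`, one has
`Σ_m (r (z m + 1) − U m)(U m − r (z m)) ≤ (d / (2(Z−1)²)) ‖U‖²`. -/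
theorem mucsc_uniform_centroid_error_bound
    (d Z : ℕ) (hd : 1 ≤ d) (hZ : 2 ≤ Z)
    (U : Fin d → ℝ) (Umin Umax : ℝ)
    (hUmin : IsLeast (Set.range U) Umin) (hUmax : IsGreatest (Set.range U) Umax)
    (r : ℕ → ℝ)
    (hr : ∀ z : ℕ, r z = Umin + ((z : ℝ) - 1) * (Umax - Umin) / ((Z : ℝ) - 1))
    (zm : Fin d → ℕ)
    (hz1 : ∀ m, 1 ≤ zm m) (hz2 : ∀ m, zm m ≤ Z - 1)
    (hlo : ∀ m, r (zm m) ≤ U m) (hhi : ∀ m, U m ≤ r (zm m + 1)) :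
    ∑ m, (r (zm m + 1) - U m) * (U m - r (zm m)) ≤
      (d : ℝ) / (2 * ((Z : ℝ) - 1) ^ 2) * ∑ m, (U m) ^ 2 :=
  mucsc_uniform_centroid_error_bound_general d Z U Umin Umax hUmin hUmax r hr zm
end
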